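/- arXiv:1104.3198 — 6 statements merged into one kernel-verified Lean document; each statement's English description precedes it below -/
import Mathlib

section
/- Suppose y, z : ℝ → ℝ satisfy the general cubically semi-linear system y'' + α₁₁y'³ + α₁₂y'²z' + α₁₃y'z'² + α₁₄z'³ + β₁₁y'² + β₁₂y'z' + β₁₃z'² + γ₁₁y' + γ₁₂z' + δ₁ = 0, z'' + α₂₁y'³ + α₂₂y'²z' + α₂₃y'z'² + α₂₄z'³ + β₂₁y'² + β₂₂y'z' + β₂₃z'² + γ₂₁y' + γ₂₂z' + δ₂ = 0. If the coefficients satisfy α₁₁ = −α₁₃/3 = α₂₂/3 = −α₂₄, −α₁₂/3 = α₁₄ = α₂₁ = −α₂₃/3, β₁₁ = β₂₂/2 = −β₁₃, β₂₁ = −β₁₂/2 = −β₂₃, γ₁₁ = γ₂₂, γ₂₁ = −γ₁₂, then u = y + iz satisfies the complex ODE u'' + E₃u'³ + E₂u'² + E₁u' + E₀ = 0 with E₃ = α₁₁ + iα₂₁, E₂ = β₁₁ + iβ₂₁, E₁ = γ₁₁ + iγ₂₁, E₀ = δ₁ + iδ₂. -/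
/-- Theorem 2 of the paper: under the stated coefficient conditions,
a real cubically semi-linear system for (y,z) yields a complex cubically
semi-linear ODE for u = y + iz. -/
theorem real_system_to_complex_cubic_ode
    (y z : ℝ → ℝ)
    (α11 α12 α13 α14 α21 α22 α23 α24 : ℝ → ℝ)
    (β11 β12 β13 β21 β22 β23 : ℝ → ℝ)
    (γ11 γ12 γ21 γ22 δ1 δ2 : ℝ → ℝ)
    (hy : ∀ x, DifferentiableAt ℝ y x) (hy' : ∀ x, DifferentiableAt ℝ (deriv y) x)
    (hz : ∀ x, DifferentiableAt ℝ z x) (hz' : ∀ x, DifferentiableAt ℝ (deriv z) x)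
    (hsys : ∀ x,
      deriv (deriv y) x + α11 x * (deriv y x) ^ 3 + α12 x * (deriv y x) ^ 2 * deriv z x
        + α13 x * deriv y x * (deriv z x) ^ 2 + α14 x * (deriv z x) ^ 3
        + β11 x * (deriv y x) ^ 2 + β12 x * deriv y x * deriv z x + β13 x * (deriv z x) ^ 2
        + γ11 x * deriv y x + γ12 x * deriv z x + δ1 x = 0 ∧
      deriv (deriv z) x + α21 x * (deriv y x) ^ 3 + α22 x * (deriv y x) ^ 2 * deriv z x
        + α23 x * deriv y x * (deriv z x) ^ 2 + α24 x * (deriv z x) ^ 3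
        + β21 x * (deriv y x) ^ 2 + β22 x * deriv y x * deriv z x + β23 x * (deriv z x) ^ 2
        + γ21 x * deriv y x + γ22 x * deriv z x + δ2 x = 0)
    (hα1 : ∀ x, α11 x = -(α13 x) / 3) (hα2 : ∀ x, α11 x = α22 x / 3)
    (hα3 : ∀ x, α11 x = -(α24 x))
    (hα4 : ∀ x, -(α12 x) / 3 = α14 x) (hα5 : ∀ x, α14 x = α21 x)
    (hα6 : ∀ x, α21 x = -(α23 x) / 3)
    (hβ1 : ∀ x, β11 x = β22 x / 2) (hβ2 : ∀ x, β11 x = -(β13 x))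
    (hβ3 : ∀ x, β21 x = -(β12 x) / 2) (hβ4 : ∀ x, β21 x = -(β23 x))
    (hγ1 : ∀ x, γ11 x = γ22 x) (hγ2 : ∀ x, γ21 x = -(γ12 x))
    (u : ℝ → ℂ) (hu : ∀ x, u x = (y x : ℂ) + (z x : ℂ) * Complex.I) :
    ∀ x, deriv (deriv u) x
        + ((α11 x : ℂ) + (α21 x : ℂ) * Complex.I) * (deriv u x) ^ 3
        + ((β11 x : ℂ) + (β21 x : ℂ) * Complex.I) * (deriv u x) ^ 2
        + ((γ11 x : ℂ) + (γ21 x : ℂ) * Complex.I) * deriv u x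
        + ((δ1 x : ℂ) + (δ2 x : ℂ) * Complex.I) = 0 := by
  have hderiv : ∀ (f g : ℝ → ℝ) (hf : ∀ x, DifferentiableAt ℝ f x)
      (hg : ∀ x, DifferentiableAt ℝ g x) (x : ℝ),
      deriv (fun t => (f t : ℂ) + (g t : ℂ) * Complex.I) x
        = ((deriv f x : ℝ) : ℂ) + ((deriv g x : ℝ) : ℂ) * Complex.I := by
    intro f g hf hg x
    have h1 : HasDerivAt (fun t => ((f t : ℂ) + (g t : ℂ) * Complex.I))
        (((deriv f x : ℝ) : ℂ) + ((deriv g x : ℝ) : ℂ) * Complex.I) x :=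
      (((hf x).hasDerivAt).ofReal_comp).add
        ((((hg x).hasDerivAt).ofReal_comp).mul_const Complex.I)
    exact h1.deriv
  have hu' : ∀ x, deriv u x = ((deriv y x : ℝ) : ℂ) + ((deriv z x : ℝ) : ℂ) * Complex.I := by
    intro x
    have : u = fun t => (y t : ℂ) + (z t : ℂ) * Complex.I := funext hu
    rw [this]; exact hderiv y z hy hz x
  intro x
  have hu'' : deriv (deriv u) x
      = ((deriv (deriv y) x : ℝ) : ℂ) + ((deriv (deriv z) x : ℝ) : ℂ) * Complex.I := by
    have : deriv u = fun t => ((deriv y t : ℝ) : ℂ) + ((deriv z t : ℝ) : ℂ) * Complex.I := funext hu'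
    rw [this]; exact hderiv (deriv y) (deriv z) hy' hz' x
  obtain ⟨h1, h2⟩ := hsys x
  have H1 : (((deriv (deriv y) x : ℝ) : ℂ)) + α11 x * ((deriv y x : ℝ) : ℂ) ^ 3
      + α12 x * ((deriv y x : ℝ) : ℂ) ^ 2 * ((deriv z x : ℝ) : ℂ)
      + α13 x * ((deriv y x : ℝ) : ℂ) * ((deriv z x : ℝ) : ℂ) ^ 2 + α14 x * ((deriv z x : ℝ) : ℂ) ^ 3
      + β11 x * ((deriv y x : ℝ) : ℂ) ^ 2 + β12 x * ((deriv y x : ℝ) : ℂ) * ((deriv z x : ℝ) : ℂ)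
      + β13 x * ((deriv z x : ℝ) : ℂ) ^ 2
      + γ11 x * ((deriv y x : ℝ) : ℂ) + γ12 x * ((deriv z x : ℝ) : ℂ) + δ1 x = 0 := by
    exact_mod_cast congrArg (Complex.ofReal) h1
  have H2 : (((deriv (deriv z) x : ℝ) : ℂ)) + α21 x * ((deriv y x : ℝ) : ℂ) ^ 3
      + α22 x * ((deriv y x : ℝ) : ℂ) ^ 2 * ((deriv z x : ℝ) : ℂ)
      + α23 x * ((deriv y x : ℝ) : ℂ) * ((deriv z x : ℝ) : ℂ) ^ 2 + α24 x * ((deriv z x : ℝ) : ℂ) ^ 3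
      + β21 x * ((deriv y x : ℝ) : ℂ) ^ 2 + β22 x * ((deriv y x : ℝ) : ℂ) * ((deriv z x : ℝ) : ℂ)
      + β23 x * ((deriv z x : ℝ) : ℂ) ^ 2
      + γ21 x * ((deriv y x : ℝ) : ℂ) + γ22 x * ((deriv z x : ℝ) : ℂ) + δ2 x = 0 := by
    exact_mod_cast congrArg (Complex.ofReal) h2
  have e13 : (α13 x : ℂ) = -3 * α11 x := by
    have := hα1 x; push_cast [this]; ring
  have e22 : (α22 x : ℂ) = 3 * α11 x := by
    have := hα2 x; push_cast [this]; ring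
  have e24 : (α24 x : ℂ) = -(α11 x) := by
    have := hα3 x; push_cast [this]; ring
  have e12 : (α12 x : ℂ) = -3 * α21 x := by
    have h := (hα4 x).trans (hα5 x); push_cast [← h]; ring
  have e14 : (α14 x : ℂ) = α21 x := by exact_mod_cast congrArg Complex.ofReal (hα5 x)
  have e23 : (α23 x : ℂ) = -3 * α21 x := by
    have := hα6 x; push_cast [this]; ring
  have f22 : (β22 x : ℂ) = 2 * β11 x := by
    have := hβ1 x; push_cast [this]; ring
  have f13 : (β13 x : ℂ) = -(β11 x) := by
    have := hβ2 x; push_cast [this]; ring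
  have f12 : (β12 x : ℂ) = -2 * β21 x := by
    have := hβ3 x; push_cast [this]; ring
  have f23 : (β23 x : ℂ) = -(β21 x) := by
    have := hβ4 x; push_cast [this]; ring
  have g22 : (γ22 x : ℂ) = γ11 x := by
    exact_mod_cast congrArg Complex.ofReal (hγ1 x).symm
  have g12 : (γ12 x : ℂ) = -(γ21 x) := by
    have := hγ2 x; push_cast [this]; ring
  rw [hu'', hu']
  have hI : (Complex.I) ^ 2 = -1 := Complex.I_sq
  set Y := ((deriv y x : ℝ) : ℂ)
  set Z := ((deriv z x : ℝ) : ℂ)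
  linear_combination H1 + Complex.I * H2
    - Y^2 * Z * e12 - Complex.I * Y^2 * Z * e22
    - Y * Z^2 * e13 - Complex.I * Y * Z^2 * e23
    - Z^3 * e14 - Complex.I * Z^3 * e24
    - Y * Z * f12 - Complex.I * Y * Z * f22
    - Z^2 * f13 - Complex.I * Z^2 * f23
    - Z * g12 - Complex.I * Z * g22
    + (3 * α11 x * Y * Z^2 + α11 x * Z^3 * Complex.I + 3 * α21 x * Y^2 * Z
      + 3 * α21 x * Y * Z^2 * Complex.I + α21 x * Z^3 * (Complex.I^2 - 1)
      + β11 x * Z^2 + 2 * β21 x * Y * Z + β21 x * Z^2 * Complex.I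
      + γ21 x * Z) * hI
end

section
/- Let M₁, M₂ : ℝ → ℝ be twice differentiable functions satisfying 2M₁' = α₁M₁ − α₂M₂ and 2M₂' = α₁M₂ + α₂M₁, with M₁² + M₂² > 0. Suppose y₁, y₂ satisfy the transformed system, and define y = M₁y₁ − M₂y₂, z = M₁y₂ + M₂y₁. If y₁'' = α₃y₁ − α₄y₂ and y₂'' = α₄y₁ + α₃y₂ where α₃ = [M₁(α₁M₁' − α₂M₂' − M₁'') + M₂(α₁M₂' + α₂M₁' − M₂'')]/(M₁²+M₂²) and α₄ = [M₁(α₁M₂' + α₂M₁' − M₂'') − M₂(α₁M₁' − α₂M₂' − M₁'')]/(M₁²+M₂²), then y'' = α₁y' − α₂z' and z'' = α₂y' + α₁z'. -/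
/-- Theorem 5 of the paper: equivalence of the two linear canonical
forms via the point transformation y = M₁y₁ − M₂y₂, z = M₁y₂ + M₂y₁. -/
theorem equivalence_of_linear_forms
    (M₁ M₂ α₁ α₂ α₃ α₄ y₁ y₂ : ℝ → ℝ)
    (hM₁ : ∀ x, DifferentiableAt ℝ M₁ x) (hM₁' : ∀ x, DifferentiableAt ℝ (deriv M₁) x)
    (hM₂ : ∀ x, DifferentiableAt ℝ M₂ x) (hM₂' : ∀ x, DifferentiableAt ℝ (deriv M₂) x)
    (hy₁ : ∀ x, DifferentiableAt ℝ y₁ x) (hy₁' : ∀ x, DifferentiableAt ℝ (deriv y₁) x)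
    (hy₂ : ∀ x, DifferentiableAt ℝ y₂ x) (hy₂' : ∀ x, DifferentiableAt ℝ (deriv y₂) x)
    (hM : ∀ x, 2 * deriv M₁ x = α₁ x * M₁ x - α₂ x * M₂ x)
    (hM' : ∀ x, 2 * deriv M₂ x = α₁ x * M₂ x + α₂ x * M₁ x)
    (hpos : ∀ x, 0 < (M₁ x) ^ 2 + (M₂ x) ^ 2)
    (hα₃ : ∀ x, α₃ x =
      (M₁ x * (α₁ x * deriv M₁ x - α₂ x * deriv M₂ x - deriv (deriv M₁) x)
        + M₂ x * (α₁ x * deriv M₂ x + α₂ x * deriv M₁ x - deriv (deriv M₂) x))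
        / ((M₁ x) ^ 2 + (M₂ x) ^ 2))
    (hα₄ : ∀ x, α₄ x =
      (M₁ x * (α₁ x * deriv M₂ x + α₂ x * deriv M₁ x - deriv (deriv M₂) x)
        - M₂ x * (α₁ x * deriv M₁ x - α₂ x * deriv M₂ x - deriv (deriv M₁) x))
        / ((M₁ x) ^ 2 + (M₂ x) ^ 2))
    (hsol₁ : ∀ x, deriv (deriv y₁) x = α₃ x * y₁ x - α₄ x * y₂ x)
    (hsol₂ : ∀ x, deriv (deriv y₂) x = α₄ x * y₁ x + α₃ x * y₂ x) :
    ∀ x,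
      deriv (deriv (fun t => M₁ t * y₁ t - M₂ t * y₂ t)) x
        = α₁ x * deriv (fun t => M₁ t * y₁ t - M₂ t * y₂ t) x
          - α₂ x * deriv (fun t => M₁ t * y₂ t + M₂ t * y₁ t) x ∧
      deriv (deriv (fun t => M₁ t * y₂ t + M₂ t * y₁ t)) x
        = α₂ x * deriv (fun t => M₁ t * y₁ t - M₂ t * y₂ t) x
          + α₁ x * deriv (fun t => M₁ t * y₂ t + M₂ t * y₁ t) x := by
  -- first derivatives as functions
  have d1 : deriv (fun t => M₁ t * y₁ t - M₂ t * y₂ t)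
      = fun t => deriv M₁ t * y₁ t + M₁ t * deriv y₁ t
        - (deriv M₂ t * y₂ t + M₂ t * deriv y₂ t) := by
    funext t
    rw [deriv_fun_sub ((hM₁ t).fun_mul (hy₁ t)) ((hM₂ t).fun_mul (hy₂ t)),
      deriv_fun_mul (hM₁ t) (hy₁ t), deriv_fun_mul (hM₂ t) (hy₂ t)]
  have d2 : deriv (fun t => M₁ t * y₂ t + M₂ t * y₁ t)
      = fun t => deriv M₁ t * y₂ t + M₁ t * deriv y₂ t
        + (deriv M₂ t * y₁ t + M₂ t * deriv y₁ t) := by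
    funext t
    rw [deriv_fun_add ((hM₁ t).fun_mul (hy₂ t)) ((hM₂ t).fun_mul (hy₁ t)),
      deriv_fun_mul (hM₁ t) (hy₂ t), deriv_fun_mul (hM₂ t) (hy₁ t)]
  intro x
  have hS := (hpos x).ne'
  -- key algebraic identities for α₃, α₄
  have hA : M₁ x * α₃ x - M₂ x * α₄ x
      = α₁ x * deriv M₁ x - α₂ x * deriv M₂ x - deriv (deriv M₁) x := by
    rw [hα₃ x, hα₄ x]; field_simp; ring
  have hB : M₂ x * α₃ x + M₁ x * α₄ x
      = α₁ x * deriv M₂ x + α₂ x * deriv M₁ x - deriv (deriv M₂) x := by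
    rw [hα₃ x, hα₄ x]; field_simp; ring
  have e1 : deriv (deriv (fun t => M₁ t * y₁ t - M₂ t * y₂ t)) x
      = deriv (deriv M₁) x * y₁ x + 2 * (deriv M₁ x * deriv y₁ x)
        + M₁ x * deriv (deriv y₁) x
        - (deriv (deriv M₂) x * y₂ x + 2 * (deriv M₂ x * deriv y₂ x)
          + M₂ x * deriv (deriv y₂) x) := by
    rw [d1, deriv_fun_sub (((hM₁' x).fun_mul (hy₁ x)).fun_add ((hM₁ x).fun_mul (hy₁' x)))
        (((hM₂' x).fun_mul (hy₂ x)).fun_add ((hM₂ x).fun_mul (hy₂' x))),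
      deriv_fun_add ((hM₁' x).fun_mul (hy₁ x)) ((hM₁ x).fun_mul (hy₁' x)),
      deriv_fun_add ((hM₂' x).fun_mul (hy₂ x)) ((hM₂ x).fun_mul (hy₂' x)),
      deriv_fun_mul (hM₁' x) (hy₁ x), deriv_fun_mul (hM₁ x) (hy₁' x),
      deriv_fun_mul (hM₂' x) (hy₂ x), deriv_fun_mul (hM₂ x) (hy₂' x)]
    ring
  have e2 : deriv (deriv (fun t => M₁ t * y₂ t + M₂ t * y₁ t)) x
      = deriv (deriv M₁) x * y₂ x + 2 * (deriv M₁ x * deriv y₂ x)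
        + M₁ x * deriv (deriv y₂) x
        + (deriv (deriv M₂) x * y₁ x + 2 * (deriv M₂ x * deriv y₁ x)
          + M₂ x * deriv (deriv y₁) x) := by
    rw [d2, deriv_fun_add (((hM₁' x).fun_mul (hy₂ x)).fun_add ((hM₁ x).fun_mul (hy₂' x)))
        (((hM₂' x).fun_mul (hy₁ x)).fun_add ((hM₂ x).fun_mul (hy₁' x))),
      deriv_fun_add ((hM₁' x).fun_mul (hy₂ x)) ((hM₁ x).fun_mul (hy₂' x)),
      deriv_fun_add ((hM₂' x).fun_mul (hy₁ x)) ((hM₂ x).fun_mul (hy₁' x)),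
      deriv_fun_mul (hM₁' x) (hy₂ x), deriv_fun_mul (hM₁ x) (hy₂' x),
      deriv_fun_mul (hM₂' x) (hy₁ x), deriv_fun_mul (hM₂ x) (hy₁' x)]
    ring
  constructor
  · rw [e1, hsol₁ x, hsol₂ x]
    simp only [d1, d2]
    linear_combination y₁ x * hA - y₂ x * hB + deriv y₁ x * hM x - deriv y₂ x * hM' x
  · rw [e2, hsol₁ x, hsol₂ x]
    simp only [d1, d2]
    linear_combination y₂ x * hA + y₁ x * hB + deriv y₂ x * hM x + deriv y₁ x * hM' x
end

section
/- Let y, z : ℝ → ℝ (defined for x > 0) satisfy the nonlinear system y'' + y'² − z'² = −(2/x)y', z'' + 2y'z' = −(2/x)z'. Define χ = 1/x, Y(χ) = e^{y} cos z, Z(χ) = e^{y} sin z (regarded as functions of χ). Then d²Y/dχ² = 0 and d²Z/dχ² = 0. -/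
open Real Filter

private lemma aux_free_particle
    (y z C S : ℝ → ℝ)
    (hy : ∀ x : ℝ, 0 < x → DifferentiableAt ℝ y x)
    (hy' : ∀ x : ℝ, 0 < x → DifferentiableAt ℝ (deriv y) x)
    (hz : ∀ x : ℝ, 0 < x → DifferentiableAt ℝ z x)
    (hz' : ∀ x : ℝ, 0 < x → DifferentiableAt ℝ (deriv z) x)
    (hsys : ∀ x : ℝ, 0 < x →
      deriv (deriv y) x + (deriv y x) ^ 2 - (deriv z x) ^ 2 = -(2 / x) * deriv y x ∧
      deriv (deriv z) x + 2 * deriv y x * deriv z x = -(2 / x) * deriv z x)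
    (hC : ∀ t : ℝ, HasDerivAt C (-S t) t)
    (hS : ∀ t : ℝ, HasDerivAt S (C t) t) :
    ∀ χ : ℝ, 0 < χ →
      deriv (deriv (fun s => Real.exp (y (1 / s)) * C (z (1 / s)))) χ = 0 := by
  set G : ℝ → ℝ := fun s => (-(s ^ 2)⁻¹) *
    (Real.exp (y (1 / s)) *
      (deriv y (1 / s) * C (z (1 / s)) - deriv z (1 / s) * S (z (1 / s)))) with hGdef
  -- Step A: first derivative formula on (0, ∞)
  have stepA : ∀ s : ℝ, 0 < s →
      HasDerivAt (fun s => Real.exp (y (1 / s)) * C (z (1 / s))) (G s) s := by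
    intro s hs
    have hx : (0:ℝ) < 1 / s := by positivity
    have hinv : HasDerivAt (fun t : ℝ => 1 / t) (-(s ^ 2)⁻¹) s := by
      simpa [one_div] using hasDerivAt_inv hs.ne'
    have hyc : HasDerivAt (fun t => y (1 / t)) (deriv y (1 / s) * (-(s ^ 2)⁻¹)) s :=
      ((hy _ hx).hasDerivAt).comp s hinv
    have hzc : HasDerivAt (fun t => z (1 / t)) (deriv z (1 / s) * (-(s ^ 2)⁻¹)) s :=
      ((hz _ hx).hasDerivAt).comp s hinv
    have hexp : HasDerivAt (fun t => Real.exp (y (1 / t)))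
        (Real.exp (y (1 / s)) * (deriv y (1 / s) * (-(s ^ 2)⁻¹))) s := hyc.exp
    have hCz : HasDerivAt (fun t => C (z (1 / t)))
        (-S (z (1 / s)) * (deriv z (1 / s) * (-(s ^ 2)⁻¹))) s := (hC _).comp s hzc
    have := hexp.mul hCz
    refine this.congr_deriv ?_
    simp only [hGdef]
    ring
  intro χ hχ
  -- Step B: deriv F = G near χ
  have hev : deriv (fun s => Real.exp (y (1 / s)) * C (z (1 / s))) =ᶠ[nhds χ] G := by
    filter_upwards [isOpen_Ioi.mem_nhds hχ] with s hs
    exact (stepA s hs).deriv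
  rw [hev.deriv_eq]
  -- Step C: HasDerivAt G 0 χ
  have hx : (0:ℝ) < 1 / χ := by positivity
  have hinv : HasDerivAt (fun t : ℝ => 1 / t) (-(χ ^ 2)⁻¹) χ := by
    simpa [one_div] using hasDerivAt_inv hχ.ne'
  have hyc : HasDerivAt (fun t => y (1 / t)) (deriv y (1 / χ) * (-(χ ^ 2)⁻¹)) χ :=
    ((hy _ hx).hasDerivAt).comp χ hinv
  have hzc : HasDerivAt (fun t => z (1 / t)) (deriv z (1 / χ) * (-(χ ^ 2)⁻¹)) χ :=
    ((hz _ hx).hasDerivAt).comp χ hinv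
  have hy'c : HasDerivAt (fun t => deriv y (1 / t))
      (deriv (deriv y) (1 / χ) * (-(χ ^ 2)⁻¹)) χ :=
    ((hy' _ hx).hasDerivAt).comp χ hinv
  have hz'c : HasDerivAt (fun t => deriv z (1 / t))
      (deriv (deriv z) (1 / χ) * (-(χ ^ 2)⁻¹)) χ :=
    ((hz' _ hx).hasDerivAt).comp χ hinv
  have hexp : HasDerivAt (fun t => Real.exp (y (1 / t)))
      (Real.exp (y (1 / χ)) * (deriv y (1 / χ) * (-(χ ^ 2)⁻¹))) χ := hyc.exp
  have hCz : HasDerivAt (fun t => C (z (1 / t)))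
      (-S (z (1 / χ)) * (deriv z (1 / χ) * (-(χ ^ 2)⁻¹))) χ := (hC _).comp χ hzc
  have hSz : HasDerivAt (fun t => S (z (1 / t)))
      (C (z (1 / χ)) * (deriv z (1 / χ) * (-(χ ^ 2)⁻¹))) χ := (hS _).comp χ hzc
  have hbr : HasDerivAt
      (fun t => deriv y (1 / t) * C (z (1 / t)) - deriv z (1 / t) * S (z (1 / t)))
      ((deriv (deriv y) (1 / χ) * (-(χ ^ 2)⁻¹)) * C (z (1 / χ)) +
        deriv y (1 / χ) * (-S (z (1 / χ)) * (deriv z (1 / χ) * (-(χ ^ 2)⁻¹))) -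
        ((deriv (deriv z) (1 / χ) * (-(χ ^ 2)⁻¹)) * S (z (1 / χ)) +
          deriv z (1 / χ) * (C (z (1 / χ)) * (deriv z (1 / χ) * (-(χ ^ 2)⁻¹))))) χ :=
    (hy'c.mul hCz).sub (hz'c.mul hSz)
  have hE := hexp.mul hbr
  have hneg : HasDerivAt (fun s : ℝ => -(s ^ 2)⁻¹) (2 * (χ ^ 3)⁻¹) χ := by
    have h := (hasDerivAt_pow 2 χ).inv (by positivity)
    have := h.neg
    refine this.congr_deriv ?_
    field_simp
    ring
  have hG := hneg.mul hE
  have hG0 : HasDerivAt G 0 χ := by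
    refine hG.congr_deriv ?_
    simp only [Pi.mul_apply]
    obtain ⟨h1, h2⟩ := hsys (1 / χ) hx
    set a := deriv y (1 / χ)
    set b := deriv z (1 / χ)
    set a2 := deriv (deriv y) (1 / χ)
    set b2 := deriv (deriv z) (1 / χ)
    have ha2 : a2 = -(2 * χ) * a - a ^ 2 + b ^ 2 := by
      have : -(2 / (1 / χ)) = -(2 * χ) := by field_simp
      rw [this] at h1; linarith
    have hb2 : b2 = -(2 * χ) * b - 2 * a * b := by
      have : -(2 / (1 / χ)) = -(2 * χ) := by field_simp
      rw [this] at h2; linarith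
    rw [ha2, hb2]
    field_simp
    ring
  exact hG0.deriv

/-- Application 1: the nonlinear system
y'' + y'² − z'² = −(2/x)y', z'' + 2y'z' = −(2/x)z' (for x > 0) is mapped by
χ = 1/x, Y = e^y cos z, Z = e^y sin z to the free particle system
d²Y/dχ² = 0 = d²Z/dχ². -/
theorem application_one_free_particle
    (y z : ℝ → ℝ)
    (hy : ∀ x : ℝ, 0 < x → DifferentiableAt ℝ y x)
    (hy' : ∀ x : ℝ, 0 < x → DifferentiableAt ℝ (deriv y) x)
    (hz : ∀ x : ℝ, 0 < x → DifferentiableAt ℝ z x)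
    (hz' : ∀ x : ℝ, 0 < x → DifferentiableAt ℝ (deriv z) x)
    (hsys : ∀ x : ℝ, 0 < x →
      deriv (deriv y) x + (deriv y x) ^ 2 - (deriv z x) ^ 2 = -(2 / x) * deriv y x ∧
      deriv (deriv z) x + 2 * deriv y x * deriv z x = -(2 / x) * deriv z x) :
    ∀ χ : ℝ, 0 < χ →
      deriv (deriv (fun s => Real.exp (y (1 / s)) * Real.cos (z (1 / s)))) χ = 0 ∧
      deriv (deriv (fun s => Real.exp (y (1 / s)) * Real.sin (z (1 / s)))) χ = 0 := by
  intro χ hχ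
  constructor
  · exact aux_free_particle y z Real.cos Real.sin hy hy' hz hz' hsys
      (fun t => Real.hasDerivAt_cos t) (fun t => Real.hasDerivAt_sin t) χ hχ
  · exact aux_free_particle y z Real.sin (fun t => -Real.cos t) hy hy' hz hz' hsys
      (fun t => by simpa using Real.hasDerivAt_sin t)
      (fun t => (Real.hasDerivAt_cos t).neg.congr_deriv (neg_neg _)) χ hχ
end

section
/- Let c₁, c₂ ∈ ℝ and let y, z : ℝ → ℝ satisfy y'' + y'² − z'² = c₁y' − c₂z', z'' + 2y'z' = c₂y' + c₁z'. Then Y = e^y cos z and Z = e^y sin z satisfy the linear system Y'' = c₁Y' − c₂Z', Z'' = c₂Y' + c₁Z'. -/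
open Real

lemma aux_hasDerivAt_cosY (y z : ℝ → ℝ) (x : ℝ)
    (hy : DifferentiableAt ℝ y x) (hz : DifferentiableAt ℝ z x) :
    HasDerivAt (fun t => Real.exp (y t) * Real.cos (z t))
      (Real.exp (y x) * (deriv y x * Real.cos (z x) - deriv z x * Real.sin (z x))) x := by
  have h1 : HasDerivAt (fun t => Real.exp (y t)) (Real.exp (y x) * deriv y x) x :=
    (Real.hasDerivAt_exp (y x)).comp x hy.hasDerivAt
  have h2 : HasDerivAt (fun t => Real.cos (z t)) (-Real.sin (z x) * deriv z x) x :=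
    (Real.hasDerivAt_cos (z x)).comp x hz.hasDerivAt
  have := h1.fun_mul h2
  refine this.congr_deriv ?_
  ring

lemma aux_hasDerivAt_sinY (y z : ℝ → ℝ) (x : ℝ)
    (hy : DifferentiableAt ℝ y x) (hz : DifferentiableAt ℝ z x) :
    HasDerivAt (fun t => Real.exp (y t) * Real.sin (z t))
      (Real.exp (y x) * (deriv y x * Real.sin (z x) + deriv z x * Real.cos (z x))) x := by
  have h1 : HasDerivAt (fun t => Real.exp (y t)) (Real.exp (y x) * deriv y x) x :=
    (Real.hasDerivAt_exp (y x)).comp x hy.hasDerivAt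
  have h2 : HasDerivAt (fun t => Real.sin (z t)) (Real.cos (z x) * deriv z x) x :=
    (Real.hasDerivAt_sin (z x)).comp x hz.hasDerivAt
  have := h1.fun_mul h2
  refine this.congr_deriv ?_
  ring

/-- Application 2: the nonlinear system
y'' + y'² − z'² = c₁y' − c₂z', z'' + 2y'z' = c₂y' + c₁z' is mapped by
Y = e^y cos z, Z = e^y sin z to the linear system
Y'' = c₁Y' − c₂Z', Z'' = c₂Y' + c₁Z'. -/
theorem application_two_linear_first_derivative_form
    (c₁ c₂ : ℝ) (y z : ℝ → ℝ)
    (hy : ∀ x, DifferentiableAt ℝ y x) (hy' : ∀ x, DifferentiableAt ℝ (deriv y) x)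
    (hz : ∀ x, DifferentiableAt ℝ z x) (hz' : ∀ x, DifferentiableAt ℝ (deriv z) x)
    (hsys : ∀ x,
      deriv (deriv y) x + (deriv y x) ^ 2 - (deriv z x) ^ 2
        = c₁ * deriv y x - c₂ * deriv z x ∧
      deriv (deriv z) x + 2 * deriv y x * deriv z x
        = c₂ * deriv y x + c₁ * deriv z x) :
    ∀ x,
      deriv (deriv (fun t => Real.exp (y t) * Real.cos (z t))) x
        = c₁ * deriv (fun t => Real.exp (y t) * Real.cos (z t)) x
          - c₂ * deriv (fun t => Real.exp (y t) * Real.sin (z t)) x ∧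
      deriv (deriv (fun t => Real.exp (y t) * Real.sin (z t))) x
        = c₂ * deriv (fun t => Real.exp (y t) * Real.cos (z t)) x
          + c₁ * deriv (fun t => Real.exp (y t) * Real.sin (z t)) x := by
  have hYd : deriv (fun t => Real.exp (y t) * Real.cos (z t))
      = fun x => Real.exp (y x) * (deriv y x * Real.cos (z x) - deriv z x * Real.sin (z x)) :=
    funext fun x => (aux_hasDerivAt_cosY y z x (hy x) (hz x)).deriv
  have hZd : deriv (fun t => Real.exp (y t) * Real.sin (z t))
      = fun x => Real.exp (y x) * (deriv y x * Real.sin (z x) + deriv z x * Real.cos (z x)) :=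
    funext fun x => (aux_hasDerivAt_sinY y z x (hy x) (hz x)).deriv
  intro x
  have hey : HasDerivAt (fun t => Real.exp (y t)) (Real.exp (y x) * deriv y x) x :=
    (Real.hasDerivAt_exp (y x)).comp x (hy x).hasDerivAt
  have hcz : HasDerivAt (fun t => Real.cos (z t)) (-Real.sin (z x) * deriv z x) x :=
    (Real.hasDerivAt_cos (z x)).comp x (hz x).hasDerivAt
  have hsz : HasDerivAt (fun t => Real.sin (z t)) (Real.cos (z x) * deriv z x) x :=
    (Real.hasDerivAt_sin (z x)).comp x (hz x).hasDerivAt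
  have hinner1 : HasDerivAt (fun t => deriv y t * Real.cos (z t) - deriv z t * Real.sin (z t))
      (deriv (deriv y) x * Real.cos (z x) + deriv y x * (-Real.sin (z x) * deriv z x)
        - (deriv (deriv z) x * Real.sin (z x) + deriv z x * (Real.cos (z x) * deriv z x))) x :=
    (((hy' x).hasDerivAt.mul hcz).sub ((hz' x).hasDerivAt.mul hsz))
  have hinner2 : HasDerivAt (fun t => deriv y t * Real.sin (z t) + deriv z t * Real.cos (z t))
      (deriv (deriv y) x * Real.sin (z x) + deriv y x * (Real.cos (z x) * deriv z x)
        + (deriv (deriv z) x * Real.cos (z x) + deriv z x * (-Real.sin (z x) * deriv z x))) x :=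
    (((hy' x).hasDerivAt.mul hsz).add ((hz' x).hasDerivAt.mul hcz))
  have hY2 : HasDerivAt (deriv (fun t => Real.exp (y t) * Real.cos (z t)))
      (Real.exp (y x) * deriv y x
          * (deriv y x * Real.cos (z x) - deriv z x * Real.sin (z x))
        + Real.exp (y x) * (deriv (deriv y) x * Real.cos (z x)
          + deriv y x * (-Real.sin (z x) * deriv z x)
          - (deriv (deriv z) x * Real.sin (z x) + deriv z x * (Real.cos (z x) * deriv z x)))) x := by
    rw [hYd]; exact hey.mul hinner1
  have hZ2 : HasDerivAt (deriv (fun t => Real.exp (y t) * Real.sin (z t)))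
      (Real.exp (y x) * deriv y x
          * (deriv y x * Real.sin (z x) + deriv z x * Real.cos (z x))
        + Real.exp (y x) * (deriv (deriv y) x * Real.sin (z x)
          + deriv y x * (Real.cos (z x) * deriv z x)
          + (deriv (deriv z) x * Real.cos (z x) + deriv z x * (-Real.sin (z x) * deriv z x)))) x := by
    rw [hZd]; exact hey.mul hinner2
  obtain ⟨h1, h2⟩ := hsys x
  have e1 : deriv (deriv y) x = c₁ * deriv y x - c₂ * deriv z x
      - (deriv y x) ^ 2 + (deriv z x) ^ 2 := by linarith
  have e2 : deriv (deriv z) x = c₂ * deriv y x + c₁ * deriv z x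
      - 2 * deriv y x * deriv z x := by linarith
  rw [hY2.deriv, hZ2.deriv, hYd, hZd]
  constructor <;> · simp only [e1, e2]; ring
end

section
/- Let c₁, c₂ ∈ ℝ and let y, z : ℝ → ℝ satisfy y'' + y'² − z'² = (1+x)(c₁y' − c₂z'), z'' + 2y'z' = (1+x)(c₂y' + c₁z'). Then Y = e^y cos z and Z = e^y sin z satisfy Y'' = (1+x)(c₁Y' − c₂Z'), Z'' = (1+x)(c₂Y' + c₁Z'). -/
open Real

lemma YZ_deriv (y z : ℝ → ℝ)
    (hy : ∀ x, DifferentiableAt ℝ y x) (hz : ∀ x, DifferentiableAt ℝ z x) :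
    (deriv (fun t => Real.exp (y t) * Real.cos (z t))
      = fun x => Real.exp (y x) * (deriv y x * Real.cos (z x) - deriv z x * Real.sin (z x))) ∧
    (deriv (fun t => Real.exp (y t) * Real.sin (z t))
      = fun x => Real.exp (y x) * (deriv y x * Real.sin (z x) + deriv z x * Real.cos (z x))) := by
  constructor <;> funext x
  · have h : HasDerivAt (fun t => Real.exp (y t) * Real.cos (z t))
        (Real.exp (y x) * (deriv y x * Real.cos (z x) - deriv z x * Real.sin (z x))) x := by
      have h1 := ((hy x).hasDerivAt.exp).mul (((hz x).hasDerivAt).cos)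
      exact h1.congr_deriv (by ring)
    exact h.deriv
  · have h : HasDerivAt (fun t => Real.exp (y t) * Real.sin (z t))
        (Real.exp (y x) * (deriv y x * Real.sin (z x) + deriv z x * Real.cos (z x))) x := by
      have h1 := ((hy x).hasDerivAt.exp).mul (((hz x).hasDerivAt).sin)
      exact h1.congr_deriv (by ring)
    exact h.deriv

/-- Application 3: the nonlinear system
y'' + y'² − z'² = (1+x)(c₁y' − c₂z'), z'' + 2y'z' = (1+x)(c₂y' + c₁z') is mapped
by Y = e^y cos z, Z = e^y sin z to the linear system
Y'' = (1+x)(c₁Y' − c₂Z'), Z'' = (1+x)(c₂Y' + c₁Z'). -/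
theorem application_three_variable_coefficients
    (c₁ c₂ : ℝ) (y z : ℝ → ℝ)
    (hy : ∀ x, DifferentiableAt ℝ y x) (hy' : ∀ x, DifferentiableAt ℝ (deriv y) x)
    (hz : ∀ x, DifferentiableAt ℝ z x) (hz' : ∀ x, DifferentiableAt ℝ (deriv z) x)
    (hsys : ∀ x,
      deriv (deriv y) x + (deriv y x) ^ 2 - (deriv z x) ^ 2
        = (1 + x) * (c₁ * deriv y x - c₂ * deriv z x) ∧
      deriv (deriv z) x + 2 * deriv y x * deriv z x
        = (1 + x) * (c₂ * deriv y x + c₁ * deriv z x)) :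
    ∀ x,
      deriv (deriv (fun t => Real.exp (y t) * Real.cos (z t))) x
        = (1 + x) * (c₁ * deriv (fun t => Real.exp (y t) * Real.cos (z t)) x
          - c₂ * deriv (fun t => Real.exp (y t) * Real.sin (z t)) x) ∧
      deriv (deriv (fun t => Real.exp (y t) * Real.sin (z t))) x
        = (1 + x) * (c₂ * deriv (fun t => Real.exp (y t) * Real.cos (z t)) x
          + c₁ * deriv (fun t => Real.exp (y t) * Real.sin (z t)) x) := by
  obtain ⟨hC, hS⟩ := YZ_deriv y z hy hz
  intro x
  obtain ⟨e1, e2⟩ := hsys x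
  rw [hC, hS]
  have hcos := ((hz x).hasDerivAt).cos
  have hsin := ((hz x).hasDerivAt).sin
  have hexp := ((hy x).hasDerivAt).exp
  have hY2 : HasDerivAt
      (fun x => Real.exp (y x) * (deriv y x * Real.cos (z x) - deriv z x * Real.sin (z x)))
      (Real.exp (y x) * deriv y x * (deriv y x * Real.cos (z x) - deriv z x * Real.sin (z x))
       + Real.exp (y x) * (deriv (deriv y) x * Real.cos (z x) - deriv y x * deriv z x * Real.sin (z x)
          - (deriv (deriv z) x * Real.sin (z x) + deriv z x * deriv z x * Real.cos (z x)))) x := by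
    have h1 := hexp.mul (((hy' x).hasDerivAt.mul hcos).sub ((hz' x).hasDerivAt.mul hsin))
    exact h1.congr_deriv (by simp only [Pi.mul_apply, Pi.sub_apply, Pi.add_apply]; ring)
  have hZ2 : HasDerivAt
      (fun x => Real.exp (y x) * (deriv y x * Real.sin (z x) + deriv z x * Real.cos (z x)))
      (Real.exp (y x) * deriv y x * (deriv y x * Real.sin (z x) + deriv z x * Real.cos (z x))
       + Real.exp (y x) * (deriv (deriv y) x * Real.sin (z x) + deriv y x * deriv z x * Real.cos (z x)
          + (deriv (deriv z) x * Real.cos (z x) - deriv z x * deriv z x * Real.sin (z x)))) x := by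
    have h1 := hexp.mul (((hy' x).hasDerivAt.mul hsin).add ((hz' x).hasDerivAt.mul hcos))
    exact h1.congr_deriv (by simp only [Pi.mul_apply, Pi.sub_apply, Pi.add_apply]; ring)
  rw [hY2.deriv, hZ2.deriv]
  constructor
  · linear_combination (Real.exp (y x) * Real.cos (z x)) * e1 - (Real.exp (y x) * Real.sin (z x)) * e2
  · linear_combination (Real.exp (y x) * Real.sin (z x)) * e1 + (Real.exp (y x) * Real.cos (z x)) * e2
end

section
/- Let c₁, c₂ ∈ ℝ and let y, z : ℝ → ℝ satisfy y'' + y'² − z'² = c₁, z'' + 2y'z' = c₂. Then Y = e^y cos z and Z = e^y sin z satisfy Y'' = c₁Y − c₂Z, Z'' = c₂Y + c₁Z. -/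
/-- Application 4: the nonlinear system
y'' + y'² − z'² = c₁, z'' + 2y'z' = c₂ is mapped by Y = e^y cos z,
Z = e^y sin z to the constant-coefficient linear system
Y'' = c₁Y − c₂Z, Z'' = c₂Y + c₁Z. -/
theorem application_four_constant_rhs
    (c₁ c₂ : ℝ) (y z : ℝ → ℝ)
    (hy : ∀ x, DifferentiableAt ℝ y x) (hy' : ∀ x, DifferentiableAt ℝ (deriv y) x)
    (hz : ∀ x, DifferentiableAt ℝ z x) (hz' : ∀ x, DifferentiableAt ℝ (deriv z) x)
    (hsys : ∀ x,
      deriv (deriv y) x + (deriv y x) ^ 2 - (deriv z x) ^ 2 = c₁ ∧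
      deriv (deriv z) x + 2 * deriv y x * deriv z x = c₂) :
    ∀ x,
      deriv (deriv (fun t => Real.exp (y t) * Real.cos (z t))) x
        = c₁ * (Real.exp (y x) * Real.cos (z x)) - c₂ * (Real.exp (y x) * Real.sin (z x)) ∧
      deriv (deriv (fun t => Real.exp (y t) * Real.sin (z t))) x
        = c₂ * (Real.exp (y x) * Real.cos (z x)) + c₁ * (Real.exp (y x) * Real.sin (z x)) := by
  intro x
  obtain ⟨h1, h2⟩ := hsys x
  have hYd : deriv (fun t => Real.exp (y t) * Real.cos (z t)) =
      fun t => Real.exp (y t) * deriv y t * Real.cos (z t)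
        + Real.exp (y t) * (-Real.sin (z t) * deriv z t) := by
    funext t
    exact (((hy t).hasDerivAt.exp).mul ((hz t).hasDerivAt.cos)).deriv
  have hZd : deriv (fun t => Real.exp (y t) * Real.sin (z t)) =
      fun t => Real.exp (y t) * deriv y t * Real.sin (z t)
        + Real.exp (y t) * (Real.cos (z t) * deriv z t) := by
    funext t
    exact (((hy t).hasDerivAt.exp).mul ((hz t).hasDerivAt.sin)).deriv
  have hE := (hy x).hasDerivAt.exp
  have hC := (hz x).hasDerivAt.cos
  have hS := (hz x).hasDerivAt.sin
  have hY' := (hy' x).hasDerivAt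
  have hZ' := (hz' x).hasDerivAt
  have hA := ((hE.mul hY').mul hC).add (hE.mul (hS.neg.mul hZ'))
  have hB := ((hE.mul hY').mul hS).add (hE.mul (hC.mul hZ'))
  constructor
  · rw [hYd]; refine hA.deriv.trans ?_; simp only [Pi.mul_apply, Pi.neg_apply]; rw [← h1, ← h2]; ring
  · rw [hZd]; refine hB.deriv.trans ?_; simp only [Pi.mul_apply, Pi.neg_apply]; rw [← h1, ← h2]; ring
end
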